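/- Let (T, [·,·,·], α) be a regular Hom-Lie triple system over a commutative ring k with Char(k) ≠ 2, and let A(T∧T) be the k-submodule of the exterior square T∧T spanned by the elements D_{a,b}·(a∧b) and D_{a,b}·(c∧d) + D_{c,d}·(a∧b) for a,b,c,d ∈ T, where D·(x∧y) = D^{α⁻¹}(x)∧y + x∧D^{α⁻¹}(y). Then the linear map γ : T∧T → T∧T determined by γ(a∧b) = α(a)∧α(b) maps A(T∧T) into A(T∧T); explicitly, γ(D_{a,b}·(a∧b)) = D_{α(a),α(b)}·(α(a)∧α(b)) and γ(D_{a,b}·(c∧d) + D_{c,d}·(a∧b)) = D_{α(a),α(b)}·(α(c)∧α(d)) + D_{α(c),α(d)}·(α(a)∧α(b)). -/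
import Mathlib


open TensorProduct

/-- The relations defining the exterior square: the span of the squares `a ⊗ a`. -/
def sqRel (k T : Type*) [CommRing k] [AddCommGroup T] [Module k T] :
    Submodule k (T ⊗[k] T) :=
  Submodule.span k {x | ∃ a : T, x = a ⊗ₜ[k] a}

/-- The exterior square `T ∧ T` of the `k`-module `T`. -/
abbrev Wedge (k T : Type*) [CommRing k] [AddCommGroup T] [Module k T] :=
  (T ⊗[k] T) ⧸ sqRel k T

/-- The wedge `a ∧ b ∈ T ∧ T`. -/
noncomputable def wedge {k T : Type*} [CommRing k] [AddCommGroup T] [Module k T] (a b : T) :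
    Wedge k T :=
  Submodule.Quotient.mk (a ⊗ₜ[k] b)

/-- The action `D · (x ∧ y) = D^{α⁻¹}(x) ∧ y + x ∧ D^{α⁻¹}(y)` of `End(T)` on `T ∧ T`. -/
noncomputable def act {k T : Type*} [CommRing k] [AddCommGroup T] [Module k T]
    (α : T ≃ₗ[k] T) (D : Module.End k T) (x y : T) : Wedge k T :=
  wedge (α.symm (D x)) y + wedge x (α.symm (D y))

/-- The submodule `A(T∧T)` spanned by `D_{a,b}·(a∧b)` and `D_{a,b}·(c∧d) + D_{c,d}·(a∧b)`. -/
def ATT {k T : Type*} [CommRing k] [AddCommGroup T] [Module k T]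
    (t : T →ₗ[k] T →ₗ[k] T →ₗ[k] T) (α : T ≃ₗ[k] T) : Submodule k (Wedge k T) :=
  Submodule.span k
    ({z | ∃ a b : T, z = act α (t a b) a b} ∪
      {z | ∃ a b c d : T, z = act α (t a b) c d + act α (t c d) a b})

/-- For a regular Hom-Lie triple system `(T, [·,·,·], α)` over a commutative
ring `k` with Char(k) ≠ 2, the linear map `γ : T∧T → T∧T` determined by
`γ(a∧b) = α(a)∧α(b)` maps `A(T∧T)` into `A(T∧T)`; explicitly,
`γ(D_{a,b}·(a∧b)) = D_{αa,αb}·(αa∧αb)` and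
`γ(D_{a,b}·(c∧d) + D_{c,d}·(a∧b)) = D_{αa,αb}·(αc∧αd) + D_{αc,αd}·(αa∧αb)`. -/
theorem stmt11 {k T : Type*} [CommRing k] [Invertible (2 : k)]
    [AddCommGroup T] [Module k T]
    (t : T →ₗ[k] T →ₗ[k] T →ₗ[k] T) (α : T ≃ₗ[k] T)
    (h1 : ∀ a b : T, t a a b = 0)
    (h2 : ∀ a b c : T, t a b c + t b c a + t c a b = 0)
    (h3 : ∀ a b c d e : T, t (α a) (α b) (t c d e) =
      t (t a b c) (α d) (α e) + t (α c) (t a b d) (α e) + t (α c) (α d) (t a b e))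
    (h4 : ∀ a b c : T, α (t a b c) = t (α a) (α b) (α c))
    (γ : Wedge k T →ₗ[k] Wedge k T)
    (hγ : ∀ a b : T, γ (wedge a b) = wedge (α a) (α b)) :
    (∀ x ∈ ATT t α, γ x ∈ ATT t α) ∧
    (∀ a b : T, γ (act α (t a b) a b) = act α (t (α a) (α b)) (α a) (α b)) ∧
    (∀ a b c d : T,
      γ (act α (t a b) c d + act α (t c d) a b)
        = act α (t (α a) (α b)) (α c) (α d) + act α (t (α c) (α d)) (α a) (α b)) := by
  have key : ∀ a b x y : T, γ (act α (t a b) x y)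
      = act α (t (α a) (α b)) (α x) (α y) := by
    intro a b x y
    have e1 : α.symm (t (α a) (α b) (α x)) = t a b x := by
      rw [← h4]; exact α.symm_apply_apply _
    have e2 : α.symm (t (α a) (α b) (α y)) = t a b y := by
      rw [← h4]; exact α.symm_apply_apply _
    simp only [act, map_add, hγ]
    rw [e1, e2, α.apply_symm_apply, α.apply_symm_apply]
  refine ⟨?_, fun a b => key a b a b, fun a b c d => by
    rw [map_add, key, key]⟩
  intro x hx
  refine Submodule.span_induction ?_ (by simp) (fun u v _ _ hu hv => by
    rw [map_add]; exact Submodule.add_mem _ hu hv)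
    (fun r u _ hu => by rw [map_smul]; exact Submodule.smul_mem _ r hu) hx
  rintro z (⟨a, b, rfl⟩ | ⟨a, b, c, d, rfl⟩)
  · rw [key]
    exact Submodule.subset_span (Or.inl ⟨α a, α b, rfl⟩)
  · rw [map_add, key, key]
    exact Submodule.subset_span (Or.inr ⟨α a, α b, α c, α d, rfl⟩)
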